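/- Every interpolating Blaschke product has weak Property 𝔥: if B is a Blaschke product whose zero sequence {α_n} is uniformly separated, then there exists η ∈ (0,1) such that the closure of each connected component of the level set Ω_{B,η} = {z ∈ 𝔻 : |B(z)| < η} is contained in 𝔻 and δ_{B,η} < 1. -/

import Mathlib

noncomputable section

/-- The level set Ω_{f,θ} = {z ∈ 𝔻 : |f(z)| < θ}. -/
def levelSet (f : ℂ → ℂ) (θ : ℝ) : Set ℂ :=
  {z : ℂ | ‖z‖ < 1 ∧ ‖f z‖ < θ}

/-- An inner function: holomorphic and bounded by 1 on 𝔻, with radial limits of modulus 1 a.e. -/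
def IsInner (u : ℂ → ℂ) : Prop :=
  DifferentiableOn ℂ u (Metric.ball (0:ℂ) 1) ∧
  (∀ z ∈ Metric.ball (0:ℂ) 1, ‖u z‖ ≤ 1) ∧
  (∀ᵐ θ : ℝ ∂MeasureTheory.volume,
    Filter.Tendsto
      (fun r : ℝ => ‖u ((r : ℂ) * Complex.exp ((θ : ℂ) * Complex.I))‖)
      (nhdsWithin 1 (Set.Iio 1)) (nhds 1))

/-- The pseudo-hyperbolic distance on 𝔻. -/
def pseudoDist (z w : ℂ) : ℝ :=
  ‖z - w‖ / ‖1 - (starRingEnd ℂ) z * w‖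

/-- δ_{u,η} : sup of pseudo-hyperbolic distances of pairs lying in a common component of Ω_{u,η}. -/
def deltaLevel (u : ℂ → ℂ) (η : ℝ) : ℝ :=
  sSup {d : ℝ | ∃ z₁ z₂ : ℂ, z₁ ∈ levelSet u η ∧
    z₂ ∈ connectedComponentIn (levelSet u η) z₁ ∧ d = pseudoDist z₁ z₂}

/-- Property 𝔅. -/
def PropertyB (u : ℂ → ℂ) : Prop :=
  ∀ θ ∈ Set.Ioo (0:ℝ) 1, ∀ z ∈ levelSet u θ,
    closure (connectedComponentIn (levelSet u θ) z) ⊆ Metric.ball (0:ℂ) 1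

/-- θ-weak Property 𝔅. -/
def WeakPropertyBAt (u : ℂ → ℂ) (θ : ℝ) : Prop :=
  θ ∈ Set.Ioo (0:ℝ) 1 ∧ ∀ z ∈ levelSet u θ,
    closure (connectedComponentIn (levelSet u θ) z) ⊆ Metric.ball (0:ℂ) 1

/-- η-weak Property 𝔥. -/
def WeakPropertyHAt (u : ℂ → ℂ) (η : ℝ) : Prop :=
  WeakPropertyBAt u η ∧ deltaLevel u η < 1

/-- Supremum norm over the unit disk. -/
def supNormD (f : ℂ → ℂ) : ℝ :=
  ⨆ z : (Metric.ball (0:ℂ) 1), ‖f (z : ℂ)‖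

/-- A Blaschke product. -/
def IsBlaschkeProduct (B : ℂ → ℂ) : Prop :=
  ∃ (ι : Type) (_ : Countable ι) (m : ℕ) (lam : ℂ) (α : ι → ℂ),
    ‖lam‖ = 1 ∧
    (∀ n, ‖α n‖ < 1 ∧ α n ≠ 0) ∧
    (Summable fun n => 1 - ‖α n‖) ∧
    ∀ z ∈ Metric.ball (0:ℂ) 1,
      B z = lam * z ^ m *
        ∏' n, ((‖α n‖ : ℂ) / α n) * ((α n - z) / (1 - (starRingEnd ℂ) (α n) * z))

/-- Order of vanishing (multiplicity of zero) via iterated derivatives. -/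
def zeroOrder (f : ℂ → ℂ) (z : ℂ) : ℕ :=
  sInf {n : ℕ | iteratedDeriv n f z ≠ 0}


/-- The Blaschke factor with zero a (the factor z itself when a = 0). -/
def blaschkeFactor (a z : ℂ) : ℂ :=
  if a = 0 then z
  else ((‖a‖ : ℂ) / a) * ((a - z) / (1 - (starRingEnd ℂ) a * z))

/-- A sequence of points in 𝔻 is uniformly separated if
inf_n ∏_{k ≠ n} ρ(α_k, α_n) > 0. -/
def UniformlySeparated {ι : Type} (α : ι → ℂ) : Prop :=
  ∃ c > (0:ℝ), ∀ n : ι, c ≤ ∏' k : {k : ι // k ≠ n}, pseudoDist (α (k : ι)) (α n)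

/-- An interpolating Blaschke product: a Blaschke product whose zero sequence is
uniformly separated. -/
def IsInterpolatingBlaschke (f : ℂ → ℂ) : Prop :=
  ∃ (ι : Type) (_ : Countable ι) (lam : ℂ) (α : ι → ℂ),
    ‖lam‖ = 1 ∧
    (∀ n, ‖α n‖ < 1) ∧
    (Summable fun n => 1 - ‖α n‖) ∧
    (∀ z ∈ Metric.ball (0:ℂ) 1, f z = lam * ∏' n, blaschkeFactor (α n) z) ∧
    UniformlySeparated α

/-!
Uniform separation with constant `c ≤ 1` bounds every row sum `∑_{k ≠ n} (1 - ρ(α_k, α_n)²)` by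
`2 log (1/c)`. A packing argument in Carleson boxes turns such row bounds into a bound
`∑_k (1 - |α_k|²) ≤ C`, and since `ρ` is invariant under the disc automorphism
`w ↦ (z - w) / (1 - z̄ w)`, also `∑_k (1 - ρ(α_k, z)²) ≤ C` uniformly in `z ∈ 𝔻`. As
`-log ρ ≤ (1 - ρ²) / ε` for `ρ ≥ ε`, this gives `|B z| ≥ exp (-C/ε)` whenever `z` is `ε`-far from
all zeros. So for `η = exp (-C/ε)` and `ε = c/3`, the level set `Ω_{B,η}` is covered by the
pairwise disjoint pseudo-hyperbolic discs of radius `ε` about the zeros; each component lies in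
one of them, hence has closure inside `𝔻` and pseudo-hyperbolic diameter at most `2ε`.
-/

open Complex ComplexConjugate Finset Function

/-! ### Pseudo-hyperbolic geometry of the disc -/

def pseudoDenom (x y : ℂ) : ℝ := ‖1 - conj x * y‖

lemma pseudoDenom_comm (x y : ℂ) : pseudoDenom x y = pseudoDenom y x := by
  rw [pseudoDenom, pseudoDenom, ← Complex.norm_conj]
  simp [mul_comm]

lemma pseudoDenom_sq (x y : ℂ) :
    pseudoDenom x y ^ 2 = ‖x - y‖ ^ 2 + (1 - ‖x‖ ^ 2) * (1 - ‖y‖ ^ 2) := by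
  simp only [pseudoDenom, Complex.sq_norm, normSq_apply, sub_re, one_re, mul_re, conj_re, conj_im,
    sub_im, one_im, mul_im]
  ring

lemma one_sub_mul_le_pseudoDenom (x y : ℂ) : 1 - ‖x‖ * ‖y‖ ≤ pseudoDenom x y := by
  simpa [pseudoDenom] using norm_sub_norm_le 1 (conj x * y)

lemma pseudoDenom_pos {x y : ℂ} (hx : ‖x‖ < 1) (hy : ‖y‖ ≤ 1) : 0 < pseudoDenom x y := by
  nlinarith [one_sub_mul_le_pseudoDenom x y, norm_nonneg x, norm_nonneg y]

lemma norm_sub_le_pseudoDenom {x y : ℂ} (hx : ‖x‖ ≤ 1) (hy : ‖y‖ ≤ 1) :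
    ‖x - y‖ ≤ pseudoDenom x y := by
  have hxy : 0 ≤ (1 - ‖x‖ ^ 2) * (1 - ‖y‖ ^ 2) := by
    apply mul_nonneg <;> nlinarith [norm_nonneg x, norm_nonneg y]
  have hd : 0 ≤ pseudoDenom x y := norm_nonneg _
  nlinarith [pseudoDenom_sq x y, norm_nonneg (x - y)]

lemma pseudoDenom_triangle {x u y : ℂ} (hx : ‖x‖ ≤ 1) (hu : ‖u‖ ≤ 1) (hy : ‖y‖ ≤ 1) :
    pseudoDenom x y ≤ pseudoDenom x u + pseudoDenom u y := by
  have key : 1 - conj x * y = (1 - conj x * u) + conj x * (u - y) := by ring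
  calc pseudoDenom x y ≤ pseudoDenom x u + ‖x‖ * ‖u - y‖ := by
        simpa only [pseudoDenom, key, norm_mul, Complex.norm_conj] using
          norm_add_le (1 - conj x * u) (conj x * (u - y))
    _ ≤ pseudoDenom x u + pseudoDenom u y := by
        gcongr
        exact (mul_le_of_le_one_left (norm_nonneg _) hx).trans (norm_sub_le_pseudoDenom hu hy)

lemma pseudoDenom_self {x : ℂ} (hx : ‖x‖ ≤ 1) : pseudoDenom x x = 1 - ‖x‖ ^ 2 := by
  have h : (0:ℝ) ≤ 1 - ‖x‖ ^ 2 := by nlinarith [norm_nonneg x]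
  rw [pseudoDenom, conj_mul', ← Complex.ofReal_pow, ← Complex.ofReal_one, ← Complex.ofReal_sub,
    Complex.norm_real, Real.norm_of_nonneg h]

lemma pseudoDenom_le_abs_arg_sub {x y : ℂ} (hx : ‖x‖ ≤ 1) (hy : ‖y‖ ≤ 1) :
    pseudoDenom x y ≤ |arg x - arg y| + (1 - ‖x‖) + (1 - ‖y‖) := by
  set e := exp (I * ↑(arg y - arg x))
  have he : ‖e‖ = 1 := norm_exp_I_mul_ofReal _
  have hxy : conj x * y = ↑(‖x‖ * ‖y‖) * e := by
    conv_lhs => rw [← norm_mul_exp_arg_mul_I x, ← norm_mul_exp_arg_mul_I y]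
    rw [map_mul, conj_ofReal, ← exp_conj, mul_mul_mul_comm, ← exp_add]
    simp only [e, map_mul, conj_ofReal, conj_I]
    push_cast
    ring_nf
  have hsplit : 1 - conj x * y = -(e - 1) + ↑(1 - ‖x‖ * ‖y‖) * e := by
    rw [hxy]; push_cast; ring
  have hrs : 0 ≤ 1 - ‖x‖ * ‖y‖ := by nlinarith [norm_nonneg x, norm_nonneg y]
  calc pseudoDenom x y ≤ ‖e - 1‖ + (1 - ‖x‖ * ‖y‖) := by
        rw [pseudoDenom, hsplit]
        refine (norm_add_le _ _).trans ?_
        rw [norm_neg, norm_mul, he, mul_one, Complex.norm_real, Real.norm_of_nonneg hrs]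
    _ ≤ |arg x - arg y| + (1 - ‖x‖) + (1 - ‖y‖) := by
        have := Real.norm_exp_I_mul_ofReal_sub_one_le (x := arg y - arg x)
        rw [Real.norm_eq_abs, abs_sub_comm] at this
        nlinarith [norm_nonneg x, norm_nonneg y]

lemma pseudoDist_eq_div (x y : ℂ) : pseudoDist x y = ‖x - y‖ / pseudoDenom x y := rfl

lemma pseudoDist_nonneg (x y : ℂ) : 0 ≤ pseudoDist x y :=
  div_nonneg (norm_nonneg _) (norm_nonneg _)

lemma pseudoDist_comm (x y : ℂ) : pseudoDist x y = pseudoDist y x := by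
  rw [pseudoDist_eq_div, pseudoDist_eq_div, pseudoDenom_comm, norm_sub_rev]

lemma one_sub_pseudoDist_sq {x y : ℂ} (h : 0 < pseudoDenom x y) :
    1 - pseudoDist x y ^ 2 = (1 - ‖x‖ ^ 2) * (1 - ‖y‖ ^ 2) / pseudoDenom x y ^ 2 := by
  rw [pseudoDist_eq_div, div_pow, eq_div_iff (by positivity), sub_mul,
    div_mul_cancel₀ _ (by positivity), pseudoDenom_sq]
  ring

lemma pseudoDist_lt_one {x y : ℂ} (hx : ‖x‖ < 1) (hy : ‖y‖ < 1) : pseudoDist x y < 1 := by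
  have hd := pseudoDenom_pos hx hy.le
  have h : 0 < 1 - pseudoDist x y ^ 2 := by
    rw [one_sub_pseudoDist_sq hd]
    apply div_pos (mul_pos ?_ ?_) (by positivity) <;> nlinarith [norm_nonneg x, norm_nonneg y]
  nlinarith [pseudoDist_nonneg x y]

lemma pseudoDist_le_div {x y : ℂ} (hx : ‖x‖ < 1) (hy : ‖y‖ < 1) :
    pseudoDist x y ≤ (‖x‖ + ‖y‖) / (1 + ‖x‖ * ‖y‖) := by
  have hd := pseudoDenom_pos hx hy.le
  have hxy : ‖x - y‖ ≤ ‖x‖ + ‖y‖ := norm_sub_le x y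
  have hmass : 0 ≤ (1 - ‖x‖ ^ 2) * (1 - ‖y‖ ^ 2) := by
    apply mul_nonneg <;> nlinarith [norm_nonneg x, norm_nonneg y]
  rw [pseudoDist_eq_div, div_le_div_iff₀ hd (by positivity)]
  refine le_of_pow_le_pow_left₀ two_ne_zero (by positivity) ?_
  have key : ((‖x‖ + ‖y‖) * pseudoDenom x y) ^ 2 - (‖x - y‖ * (1 + ‖x‖ * ‖y‖)) ^ 2
      = (1 - ‖x‖ ^ 2) * (1 - ‖y‖ ^ 2) * ((‖x‖ + ‖y‖) ^ 2 - ‖x - y‖ ^ 2) := by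
    rw [mul_pow, pseudoDenom_sq]; ring
  nlinarith [pow_le_pow_left₀ (norm_nonneg _) hxy 2]

lemma one_sub_sq_le_of_pseudoDenom_le {x y : ℂ} (hx : ‖x‖ < 1) (hy : ‖y‖ < 1)
    (h : pseudoDenom x y ≤ 14 * (1 - ‖y‖)) :
    1 - ‖x‖ ^ 2 ≤ 196 * (1 - ‖y‖) * (1 - pseudoDist x y ^ 2) := by
  have hd := pseudoDenom_pos hx hy.le
  have hmx : 0 ≤ 1 - ‖x‖ ^ 2 := by nlinarith [norm_nonneg x]
  have hmy : 1 - ‖y‖ ≤ 1 - ‖y‖ ^ 2 := by nlinarith [norm_nonneg y]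
  have hd2 : pseudoDenom x y ^ 2 ≤ 196 * (1 - ‖y‖) ^ 2 := by nlinarith
  rw [one_sub_pseudoDist_sq hd, mul_div_assoc', le_div_iff₀ (by positivity)]
  nlinarith [mul_le_mul_of_nonneg_left hd2 hmx,
    mul_le_mul_of_nonneg_left (mul_le_mul_of_nonneg_left hmy (by linarith : 0 ≤ 1 - ‖y‖)) hmx]

lemma inv_le_one_sub_pseudoDist_sq {x y : ℂ} (hx : ‖x‖ < 1) (hy : ‖y‖ < 1) {C : ℝ} (hC : 0 < C)
    (h : pseudoDenom x y ^ 2 ≤ C * ((1 - ‖x‖) * (1 - ‖y‖))) :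
    C⁻¹ ≤ 1 - pseudoDist x y ^ 2 := by
  have hd := pseudoDenom_pos hx hy.le
  have hmx : 1 - ‖x‖ ≤ 1 - ‖x‖ ^ 2 := by nlinarith [norm_nonneg x]
  have hmy : 1 - ‖y‖ ≤ 1 - ‖y‖ ^ 2 := by nlinarith [norm_nonneg y]
  rw [one_sub_pseudoDist_sq hd, le_div_iff₀ (by positivity), inv_mul_le_iff₀ hC]
  nlinarith [mul_le_mul hmx hmy (by linarith) (by nlinarith [norm_nonneg x])]

/-! ### Möbius invariance -/

def mobius (z w : ℂ) : ℂ := (z - w) / (1 - conj z * w)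

lemma norm_mobius (z w : ℂ) : ‖mobius z w‖ = pseudoDist z w := norm_div _ _

lemma pseudoDist_mobius {z a b : ℂ} (hz : ‖z‖ < 1) (ha : ‖a‖ < 1) (hb : ‖b‖ < 1) :
    pseudoDist (mobius z a) (mobius z b) = pseudoDist a b := by
  have hza : 1 - conj z * a ≠ 0 := norm_pos_iff.mp (pseudoDenom_pos hz ha.le)
  have hzb : 1 - conj z * b ≠ 0 := norm_pos_iff.mp (pseudoDenom_pos hz hb.le)
  have hzz := conj_mul' z
  have hsub : mobius z a - mobius z b
      = ((1 - ‖z‖ ^ 2 : ℝ) : ℂ) * (b - a) / ((1 - conj z * a) * (1 - conj z * b)) := by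
    rw [mobius, mobius, div_sub_div _ _ hza hzb]
    congr 1
    push_cast
    linear_combination (a - b) * hzz
  have hden : 1 - conj (mobius z a) * mobius z b
      = ((1 - ‖z‖ ^ 2 : ℝ) : ℂ) * (1 - conj a * b)
        / (conj (1 - conj z * a) * (1 - conj z * b)) := by
    rw [mobius, mobius, map_div₀, div_mul_div_comm, one_sub_div]
    · congr 1
      simp only [map_sub, map_mul, Complex.conj_conj, map_one]
      push_cast
      linear_combination (conj a * b - 1) * hzz
    · exact mul_ne_zero ((map_ne_zero _).mpr hza) hzb
  have hpos : (0:ℝ) < 1 - ‖z‖ ^ 2 := by nlinarith [norm_nonneg z]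
  rw [pseudoDist, hsub, hden, norm_div, norm_div, norm_mul, norm_mul, norm_mul, norm_mul,
    Complex.norm_conj, norm_sub_rev b a, div_div_div_cancel_right₀, mul_div_mul_left]
  · rfl
  · exact norm_ne_zero_iff.mpr (by exact_mod_cast hpos.ne')
  · exact mul_ne_zero (norm_ne_zero_iff.mpr hza) (norm_ne_zero_iff.mpr hzb)

lemma norm_mobius_lt_one {z w : ℂ} (hz : ‖z‖ < 1) (hw : ‖w‖ < 1) : ‖mobius z w‖ < 1 := by
  rw [norm_mobius]; exact pseudoDist_lt_one hz hw

lemma pseudoDist_triangle {x y z : ℂ} (hx : ‖x‖ < 1) (hy : ‖y‖ < 1) (hz : ‖z‖ < 1) :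
    pseudoDist x y ≤ pseudoDist x z + pseudoDist z y := by
  calc pseudoDist x y = pseudoDist (mobius z x) (mobius z y) := (pseudoDist_mobius hz hx hy).symm
    _ ≤ (‖mobius z x‖ + ‖mobius z y‖) / (1 + ‖mobius z x‖ * ‖mobius z y‖) :=
        pseudoDist_le_div (norm_mobius_lt_one hz hx) (norm_mobius_lt_one hz hy)
    _ ≤ ‖mobius z x‖ + ‖mobius z y‖ :=
        div_le_self (by positivity) (le_add_of_nonneg_right (by positivity))
    _ = pseudoDist x z + pseudoDist z y := by rw [norm_mobius, norm_mobius, pseudoDist_comm z x]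

lemma norm_le_of_pseudoDist_le {a w : ℂ} {ε : ℝ} (ha : ‖a‖ < 1) (hw : ‖w‖ < 1) (hε : ε ≤ 1)
    (h : pseudoDist a w ≤ ε) : ‖w‖ ≤ 1 - (1 - ‖a‖) * (1 - ε) / 2 := by
  have key : ‖w‖ ≤ (‖a‖ + pseudoDist a w) / (1 + ‖a‖ * pseudoDist a w) := by
    have := pseudoDist_le_div (norm_mobius_lt_one ha (w := 0) (by simp)) (norm_mobius_lt_one ha hw)
    rwa [pseudoDist_mobius ha (by simp) hw, norm_mobius, norm_mobius,
      show pseudoDist 0 w = ‖w‖ by simp [pseudoDist],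
      show pseudoDist a 0 = ‖a‖ by simp [pseudoDist]] at this
  set t := pseudoDist a w
  have ht : 0 ≤ t := pseudoDist_nonneg a w
  have hat : ‖a‖ * t ≤ 1 := by nlinarith [pseudoDist_lt_one ha hw]
  rw [le_div_iff₀ (by positivity)] at key
  have hgap : 0 ≤ (1 - ‖a‖) * ((1 - t) - (1 + ‖a‖ * t) * (1 - ε) / 2) :=
    mul_nonneg (by linarith) (by nlinarith [mul_nonneg (sub_nonneg.2 hε) (sub_nonneg.2 hat)])
  refine le_of_mul_le_mul_right ?_ (by positivity : 0 < 1 + ‖a‖ * t)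
  linarith

/-! ### Carleson packing of separated sequences -/

lemma Finset.sum_le_sum_sum_filter_of_cover {ι κ : Type*} {s : Finset ι} {t : Finset κ}
    {p : κ → ι → Prop} [∀ j, DecidablePred (p j)] {f : ι → ℝ} (hf : ∀ i ∈ s, 0 ≤ f i)
    (hcover : ∀ i ∈ s, ∃ j ∈ t, p j i) :
    ∑ i ∈ s, f i ≤ ∑ j ∈ t, ∑ i ∈ s with p j i, f i := by
  simp_rw [Finset.sum_filter]
  rw [Finset.sum_comm]
  refine Finset.sum_le_sum fun i hi => ?_
  obtain ⟨j, hj, hp⟩ := hcover i hi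
  calc f i = if p j i then f i else 0 := (if_pos hp).symm
    _ ≤ ∑ j ∈ t, if p j i then f i else 0 :=
        Finset.single_le_sum (f := fun j => if p j i then f i else 0)
          (fun j _ => by split_ifs <;> simp [hf i hi]) hj

open MeasureTheory in
lemma sum_sub_le_mul_of_multiplicity_le {ι : Type*} {M : Finset ι} {a b : ι → ℝ} {W₁ W₂ N : ℝ}
    (hab : ∀ m ∈ M, a m ≤ b m) (hW : W₁ ≤ W₂) (hsub : ∀ m ∈ M, W₁ ≤ a m ∧ b m ≤ W₂)
    (hN : 0 ≤ N) (hmult : ∀ φ : ℝ, (#{m ∈ M | a m ≤ φ ∧ φ ≤ b m} : ℝ) ≤ N) :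
    ∑ m ∈ M, (b m - a m) ≤ N * (W₂ - W₁) := by
  have hpt : ∀ φ, ∑ m ∈ M, (Set.Icc (a m) (b m)).indicator 1 φ
      ≤ (Set.Icc W₁ W₂).indicator (fun _ => ENNReal.ofReal N) φ := by
    intro φ
    by_cases hφ : φ ∈ Set.Icc W₁ W₂
    · rw [Set.indicator_of_mem hφ]
      simp only [Set.indicator_apply, Pi.one_apply, Set.mem_Icc, Finset.sum_boole]
      rw [← ENNReal.ofReal_natCast]
      exact ENNReal.ofReal_le_ofReal (hmult φ)
    · rw [Set.indicator_of_notMem hφ]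
      refine (Finset.sum_eq_zero fun m hm => Set.indicator_of_notMem ?_ _).le
      exact fun h => hφ ⟨(hsub m hm).1.trans h.1, h.2.trans (hsub m hm).2⟩
  have hlint : ∑ m ∈ M, ENNReal.ofReal (b m - a m) ≤ ENNReal.ofReal (N * (W₂ - W₁)) := by
    calc ∑ m ∈ M, ENNReal.ofReal (b m - a m)
        = ∫⁻ φ, ∑ m ∈ M, (Set.Icc (a m) (b m)).indicator 1 φ := by
          rw [lintegral_finsetSum _ fun m _ => measurable_one.indicator measurableSet_Icc]
          simp [lintegral_indicator measurableSet_Icc]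
      _ ≤ ∫⁻ φ, (Set.Icc W₁ W₂).indicator (fun _ => ENNReal.ofReal N) φ := lintegral_mono hpt
      _ = ENNReal.ofReal (N * (W₂ - W₁)) := by
          rw [lintegral_indicator measurableSet_Icc, setLIntegral_const, Real.volume_Icc,
            ← ENNReal.ofReal_mul hN]
  rw [← ENNReal.ofReal_sum_of_nonneg fun m hm => sub_nonneg.2 (hab m hm)] at hlint
  exact (ENNReal.ofReal_le_ofReal_iff (mul_nonneg hN (sub_nonneg.2 hW))).mp hlint

def HasRowSumBound {ι : Type*} (α : ι → ℂ) (A : ℝ) : Prop :=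
  ∀ n (F : Finset ι), n ∉ F → ∑ k ∈ F, (1 - pseudoDist (α k) (α n) ^ 2) ≤ A

/-- `x` lies in the Carleson box over `y` and at least twice as close to the circle. -/
def LiesUnder (x y : ℂ) : Prop :=
  2 * (1 - ‖x‖) ≤ 1 - ‖y‖ ∧ pseudoDenom x y ≤ 6 * (1 - ‖y‖)

lemma pseudoDenom_sq_le_of_not_liesUnder {x y : ℂ} (hx : ‖x‖ < 1) (hy : ‖y‖ < 1)
    (harg : |arg x - arg y| ≤ 2 * ((1 - ‖x‖) + (1 - ‖y‖)))
    (hxy : ¬ LiesUnder x y) (hyx : ¬ LiesUnder y x) :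
    pseudoDenom x y ^ 2 ≤ 41 * ((1 - ‖x‖) * (1 - ‖y‖)) := by
  have hd := pseudoDenom_le_abs_arg_sub hx.le hy.le
  have hd0 := (pseudoDenom_pos hx hy.le).le
  have h3 : pseudoDenom x y ≤ 3 * ((1 - ‖x‖) + (1 - ‖y‖)) := by linarith
  have hxy' : 1 - ‖y‖ < 2 * (1 - ‖x‖) := by
    by_contra! hc
    exact hxy ⟨hc, by linarith⟩
  have hyx' : 1 - ‖x‖ < 2 * (1 - ‖y‖) := by
    by_contra! hc
    exact hyx ⟨hc, by rw [pseudoDenom_comm]; linarith⟩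
  nlinarith [mul_le_mul h3 h3 hd0 (by linarith)]

section CarlesonBound

variable {ι : Type*} {α : ι → ℂ} {A : ℝ}

lemma HasRowSumBound.mobius (h : HasRowSumBound α A) (hα : ∀ n, ‖α n‖ < 1) {z : ℂ}
    (hz : ‖z‖ < 1) : HasRowSumBound (fun n => mobius z (α n)) A := by
  intro n F hn
  simpa only [pseudoDist_mobius hz (hα _) (hα _)] using h n F hn

lemma HasRowSumBound.card_mul_le (h : HasRowSumBound α A) (hA : 0 ≤ A) {O : Finset ι} {q : ℝ}
    (hq : 0 < q) (hpw : ∀ m ∈ O, ∀ m' ∈ O, m ≠ m' → q ≤ 1 - pseudoDist (α m) (α m') ^ 2) :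
    (#O : ℝ) * q ≤ A + q := by
  classical
  rcases O.eq_empty_or_nonempty with rfl | ⟨m₀, hm₀⟩
  · simpa using add_nonneg hA hq.le
  have hrow : (#(O.erase m₀) : ℝ) * q ≤ A := by
    calc (#(O.erase m₀) : ℝ) * q = ∑ _k ∈ O.erase m₀, q := by simp
      _ ≤ ∑ k ∈ O.erase m₀, (1 - pseudoDist (α k) (α m₀) ^ 2) :=
          Finset.sum_le_sum fun k hk =>
            hpw k (Finset.mem_of_mem_erase hk) m₀ hm₀ (Finset.ne_of_mem_erase hk)
      _ ≤ A := h m₀ _ (Finset.notMem_erase m₀ O)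
  rw [Finset.card_erase_of_mem hm₀, Nat.cast_sub (Finset.card_pos.mpr ⟨m₀, hm₀⟩)] at hrow
  push_cast at hrow
  linarith

/-- Depths at least double along a `LiesUnder` chain, so its steps, each at most six times the
next depth, sum to at most fourteen times the last one. -/
lemma exists_maximal_liesUnder (hα : ∀ n, ‖α n‖ < 1) (S : Finset ι) {k : ι} (hk : k ∈ S) :
    ∃ m ∈ S, (∀ m' ∈ S, ¬ LiesUnder (α m) (α m')) ∧
      pseudoDenom (α k) (α m) ≤ 14 * (1 - ‖α m‖) - 12 * (1 - ‖α k‖) := by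
  rcases em (∃ k₁ ∈ S, LiesUnder (α k) (α k₁)) with ⟨k₁, hk₁, hunder⟩ | hk_max
  · obtain ⟨m, hm, hmax, hdist⟩ := exists_maximal_liesUnder hα S hk₁
    refine ⟨m, hm, hmax, ?_⟩
    have := pseudoDenom_triangle (hα k).le (hα k₁).le (hα m).le
    linarith [hunder.1, hunder.2]
  · refine ⟨k, hk, fun m' hm' h => hk_max ⟨m', hm', h⟩, ?_⟩
    rw [pseudoDenom_self (hα k).le]
    nlinarith [norm_nonneg (α k), hα k]
termination_by #{m ∈ S | 2 * (1 - ‖α k‖) ≤ 1 - ‖α m‖}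
decreasing_by
  refine Finset.card_lt_card ⟨fun m hm => ?_, fun hsub => ?_⟩
  · simp only [Finset.mem_filter] at hm ⊢
    exact ⟨hm.1, by linarith [hunder.1, hα k₁]⟩
  · have := hsub (Finset.mem_filter.2 ⟨hk₁, hunder.1⟩)
    simp only [Finset.mem_filter] at this
    linarith [hα k₁, norm_nonneg (α k₁), hunder.1, hα k]

lemma HasRowSumBound.sum_shadow_le (h : HasRowSumBound α A) (hα : ∀ n, ‖α n‖ < 1)
    (S : Finset ι) (m : ι) :
    ∑ k ∈ S with pseudoDenom (α k) (α m) ≤ 14 * (1 - ‖α m‖), (1 - ‖α k‖ ^ 2)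
      ≤ (196 * A + 2) * (1 - ‖α m‖) := by
  classical
  set T := {k ∈ S | pseudoDenom (α k) (α m) ≤ 14 * (1 - ‖α m‖)}
  have hdm : 0 < 1 - ‖α m‖ := by linarith [hα m]
  have hmass : ∀ k, 0 ≤ 1 - ‖α k‖ ^ 2 := fun k => by nlinarith [norm_nonneg (α k), hα k]
  have hrest : ∑ k ∈ T.erase m, (1 - ‖α k‖ ^ 2) ≤ 196 * (1 - ‖α m‖) * A := by
    calc ∑ k ∈ T.erase m, (1 - ‖α k‖ ^ 2)
        ≤ ∑ k ∈ T.erase m, 196 * (1 - ‖α m‖) * (1 - pseudoDist (α k) (α m) ^ 2) :=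
          Finset.sum_le_sum fun k hk => one_sub_sq_le_of_pseudoDenom_le (hα k) (hα m)
            (Finset.mem_filter.1 (Finset.mem_of_mem_erase hk)).2
      _ = 196 * (1 - ‖α m‖) * ∑ k ∈ T.erase m, (1 - pseudoDist (α k) (α m) ^ 2) :=
          (Finset.mul_sum ..).symm
      _ ≤ 196 * (1 - ‖α m‖) * A := by
          gcongr
          exact h m _ (Finset.notMem_erase m T)
  calc ∑ k ∈ T, (1 - ‖α k‖ ^ 2) ≤ ∑ k ∈ insert m (T.erase m), (1 - ‖α k‖ ^ 2) :=
        Finset.sum_le_sum_of_subset_of_nonneg (Finset.insert_erase_subset m T)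
          fun k _ _ => hmass k
    _ = (1 - ‖α m‖ ^ 2) + ∑ k ∈ T.erase m, (1 - ‖α k‖ ^ 2) :=
        Finset.sum_insert (Finset.notMem_erase m T)
    _ ≤ (196 * A + 2) * (1 - ‖α m‖) := by nlinarith [norm_nonneg (α m)]

/-- Maximal points whose arcs `[arg - 2 d, arg + 2 d]` (`d` the depth) meet are comparable in depth
and pseudo-hyperbolically close, so these arcs have multiplicity at most `41 A + 1`. -/
lemma HasRowSumBound.sum_depth_le_of_maximal (h : HasRowSumBound α A) (hA : 0 ≤ A)
    (hα : ∀ n, ‖α n‖ < 1) {M : Finset ι} (hM : ∀ m ∈ M, ∀ m' ∈ M, ¬ LiesUnder (α m) (α m')) :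
    ∑ m ∈ M, (1 - ‖α m‖) ≤ 3 * (41 * A + 1) := by
  classical
  have hdepth : ∀ m, 0 < 1 - ‖α m‖ ∧ 1 - ‖α m‖ ≤ 1 := fun m =>
    ⟨by linarith [hα m], by linarith [norm_nonneg (α m)]⟩
  have hmult : ∀ φ : ℝ, (#{m ∈ M | arg (α m) - 2 * (1 - ‖α m‖) ≤ φ ∧
      φ ≤ arg (α m) + 2 * (1 - ‖α m‖)} : ℝ) ≤ 41 * A + 1 := by
    intro φ
    set O := {m ∈ M | arg (α m) - 2 * (1 - ‖α m‖) ≤ φ ∧ φ ≤ arg (α m) + 2 * (1 - ‖α m‖)}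
    have := h.card_mul_le (O := O) hA (q := 41⁻¹) (by norm_num) fun m hm m' hm' _ => by
      simp only [O, Finset.mem_filter] at hm hm'
      refine inv_le_one_sub_pseudoDist_sq (hα m) (hα m') (by norm_num)
        (pseudoDenom_sq_le_of_not_liesUnder (hα m) (hα m') ?_ (hM m hm.1 m' hm'.1)
          (hM m' hm'.1 m hm.1))
      rw [abs_le]
      constructor <;> linarith
    linarith
  have hlen := sum_sub_le_mul_of_multiplicity_le (M := M)
    (a := fun m => arg (α m) - 2 * (1 - ‖α m‖)) (b := fun m => arg (α m) + 2 * (1 - ‖α m‖))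
    (W₁ := -(Real.pi + 2)) (W₂ := Real.pi + 2) (fun m _ => by linarith [hdepth m])
    (by linarith [Real.pi_pos])
    (fun m _ => ⟨by linarith [neg_pi_lt_arg (α m), hdepth m],
      by linarith [arg_le_pi (α m), hdepth m]⟩) (by positivity) hmult
  have hsum : ∑ m ∈ M, (arg (α m) + 2 * (1 - ‖α m‖) - (arg (α m) - 2 * (1 - ‖α m‖)))
      = 4 * ∑ m ∈ M, (1 - ‖α m‖) := by
    rw [Finset.mul_sum]; exact Finset.sum_congr rfl fun m _ => by ring
  nlinarith [Real.pi_lt_four]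

/-- Every point lies under a maximal one, the mass under a maximal point is controlled by the row
sum at it, and the depths of the maximal points are summable by the arc packing. -/
theorem HasRowSumBound.sum_one_sub_norm_sq_le (h : HasRowSumBound α A) (hA : 0 ≤ A)
    (hα : ∀ n, ‖α n‖ < 1) (S : Finset ι) :
    ∑ k ∈ S, (1 - ‖α k‖ ^ 2) ≤ 3 * (196 * A + 2) * (41 * A + 1) := by
  classical
  set M := {m ∈ S | ∀ m' ∈ S, ¬ LiesUnder (α m) (α m')}
  calc ∑ k ∈ S, (1 - ‖α k‖ ^ 2)
      ≤ ∑ m ∈ M, ∑ k ∈ S with pseudoDenom (α k) (α m) ≤ 14 * (1 - ‖α m‖), (1 - ‖α k‖ ^ 2) := by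
        refine Finset.sum_le_sum_sum_filter_of_cover
          (fun k _ => by nlinarith [norm_nonneg (α k), hα k]) fun k hk => ?_
        obtain ⟨m, hm, hmax, hdist⟩ := exists_maximal_liesUnder hα S hk
        exact ⟨m, Finset.mem_filter.2 ⟨hm, hmax⟩, by linarith [hα k]⟩
    _ ≤ ∑ m ∈ M, (196 * A + 2) * (1 - ‖α m‖) :=
        Finset.sum_le_sum fun m _ => h.sum_shadow_le hα S m
    _ = (196 * A + 2) * ∑ m ∈ M, (1 - ‖α m‖) := (Finset.mul_sum ..).symm
    _ ≤ (196 * A + 2) * (3 * (41 * A + 1)) := by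
        gcongr
        exact h.sum_depth_le_of_maximal hA hα fun m hm m' hm' =>
          (Finset.mem_filter.1 hm).2 m' (Finset.mem_filter.1 hm').1
    _ = 3 * (196 * A + 2) * (41 * A + 1) := by ring

theorem HasRowSumBound.sum_one_sub_pseudoDist_sq_le (h : HasRowSumBound α A) (hA : 0 ≤ A)
    (hα : ∀ n, ‖α n‖ < 1) {z : ℂ} (hz : ‖z‖ < 1) (F : Finset ι) :
    ∑ k ∈ F, (1 - pseudoDist (α k) z ^ 2) ≤ 3 * (196 * A + 2) * (41 * A + 1) := by
  simpa only [norm_mobius, pseudoDist_comm z] using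
    (h.mobius hα hz).sum_one_sub_norm_sq_le hA (fun n => norm_mobius_lt_one hz (hα n)) F

end CarlesonBound

/-! ### Lower bound for the Blaschke product away from its zeros -/

lemma hasProd_iInf_prod {κ : Type*} {f : κ → ℝ} (h0 : ∀ i, 0 ≤ f i) (h1 : ∀ i, f i ≤ 1) :
    HasProd f (⨅ s : Finset κ, ∏ i ∈ s, f i) :=
  tendsto_atTop_ciInf (Finset.prod_anti_set_of_le_one h0 h1)
    ⟨0, by rintro _ ⟨s, rfl⟩; exact Finset.prod_nonneg fun i _ => h0 i⟩

lemma norm_blaschkeFactor (a z : ℂ) : ‖blaschkeFactor a z‖ = pseudoDist a z := by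
  by_cases ha : a = 0
  · simp [blaschkeFactor, ha, pseudoDist]
  · rw [blaschkeFactor, if_neg ha, norm_mul, norm_div, norm_div, Complex.norm_real,
      Real.norm_of_nonneg (norm_nonneg a), div_self (norm_ne_zero_iff.mpr ha), one_mul, pseudoDist]

section Products

variable {ι : Type*} {α : ι → ℂ}

lemma le_prod_pseudoDist_of_le_tprod (hα : ∀ n, ‖α n‖ < 1) {c : ℝ} {n : ι}
    (hc : c ≤ ∏' k : {k : ι // k ≠ n}, pseudoDist (α k) (α n)) {F : Finset ι} (hnF : n ∉ F) :
    c ≤ ∏ k ∈ F, pseudoDist (α k) (α n) := by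
  classical
  have h := hasProd_iInf_prod (f := fun k : {k : ι // k ≠ n} => pseudoDist (α k) (α n))
    (fun _ => pseudoDist_nonneg _ _) (fun k => (pseudoDist_lt_one (hα k) (hα n)).le)
  rw [h.tprod_eq] at hc
  refine (hc.trans (ciInf_le ⟨0, ?_⟩ (F.subtype (· ≠ n)))).trans_eq ?_
  · rintro _ ⟨s, rfl⟩; exact Finset.prod_nonneg fun _ _ => pseudoDist_nonneg _ _
  rw [Finset.prod_subtype_eq_prod_filter (f := fun k => pseudoDist (α k) (α n)),
    Finset.filter_true_of_mem]
  exact fun k hk hkn => hnF (hkn ▸ hk)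

lemma hasRowSumBound_of_le_prod {c : ℝ} (hc : 0 < c)
    (hprod : ∀ n (F : Finset ι), n ∉ F → c ≤ ∏ k ∈ F, pseudoDist (α k) (α n)) :
    HasRowSumBound α (2 * Real.log c⁻¹) := by
  intro n F hnF
  have hpos : ∀ k ∈ F, 0 < pseudoDist (α k) (α n) := fun k hk => by
    have h := hprod n {k} (Finset.notMem_singleton.2 fun h => hnF (by rwa [h]))
    rw [Finset.prod_singleton] at h
    linarith
  calc ∑ k ∈ F, (1 - pseudoDist (α k) (α n) ^ 2)
      ≤ ∑ k ∈ F, -2 * Real.log (pseudoDist (α k) (α n)) := by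
        refine Finset.sum_le_sum fun k hk => ?_
        have := Real.log_le_sub_one_of_pos (pow_pos (hpos k hk) 2)
        rw [Real.log_pow] at this
        push_cast at this
        linarith
    _ = -2 * Real.log (∏ k ∈ F, pseudoDist (α k) (α n)) := by
        rw [Real.log_prod fun k hk => (hpos k hk).ne', Finset.mul_sum]
    _ ≤ 2 * Real.log c⁻¹ := by
        rw [Real.log_inv]
        linarith [Real.log_le_log hc (hprod n F hnF)]

lemma exp_neg_div_le_prod_pseudoDist {z : ℂ} (hα : ∀ n, ‖α n‖ < 1) (hz : ‖z‖ < 1) {C ε : ℝ}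
    (hε : 0 < ε) (hsum : ∀ F : Finset ι, ∑ k ∈ F, (1 - pseudoDist (α k) z ^ 2) ≤ C)
    (hfar : ∀ k, ε ≤ pseudoDist (α k) z) (G : Finset ι) :
    Real.exp (-(C / ε)) ≤ ∏ k ∈ G, pseudoDist (α k) z := by
  have hpos : ∀ k, 0 < pseudoDist (α k) z := fun k => hε.trans_le (hfar k)
  have hterm : ∀ k, ε * -Real.log (pseudoDist (α k) z) ≤ 1 - pseudoDist (α k) z ^ 2 := by
    intro k
    set ρ := pseudoDist (α k) z
    have hρ : ρ ≤ 1 := (pseudoDist_lt_one (hα k) hz).le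
    calc ε * -Real.log ρ ≤ ε * (ρ⁻¹ - 1) := by
          gcongr
          linarith [Real.one_sub_inv_le_log_of_pos (hpos k)]
      _ ≤ ρ * (ρ⁻¹ - 1) := by
          gcongr
          · exact sub_nonneg.2 ((one_le_inv₀ (hpos k)).2 hρ)
          · exact hfar k
      _ = 1 - ρ := by rw [mul_sub, mul_inv_cancel₀ (hpos k).ne', mul_one]
      _ ≤ 1 - ρ ^ 2 := by nlinarith [hpos k]
  rw [← Real.exp_log (Finset.prod_pos fun k _ => hpos k), Real.exp_le_exp,
    Real.log_prod fun k _ => (hpos k).ne', neg_le, le_div_iff₀' hε, ← Finset.sum_neg_distrib,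
    Finset.mul_sum]
  exact (Finset.sum_le_sum fun k _ => hterm k).trans (hsum G)

lemma le_norm_tprod_blaschkeFactor (hα : ∀ n, ‖α n‖ < 1) {z : ℂ} (hz : ‖z‖ < 1) {η : ℝ}
    (hη : η ≤ 1) (hprod : ∀ G : Finset ι, η ≤ ∏ k ∈ G, pseudoDist (α k) z) :
    η ≤ ‖∏' n, blaschkeFactor (α n) z‖ := by
  by_cases hm : Multipliable fun n => blaschkeFactor (α n) z
  · simp_rw [hm.norm_tprod, norm_blaschkeFactor]
    rw [(hasProd_iInf_prod (fun _ => pseudoDist_nonneg _ _)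
      fun n => (pseudoDist_lt_one (hα n) hz).le).tprod_eq]
    exact le_ciInf hprod
  · -- junk value: a non-multipliable `tprod` is `1`
    rwa [tprod_eq_one_of_not_multipliable hm, norm_one]

end Products

/-! ### Level sets -/

lemma IsPreconnected.subset_of_mem_of_subset_iUnion {X κ : Type*} [TopologicalSpace X]
    {s : Set X} {U : κ → Set X} (hs : IsPreconnected s) (hU : ∀ i, IsOpen (U i))
    (hdisj : Pairwise (Disjoint on U)) (hcover : s ⊆ ⋃ i, U i) {x : X} {i : κ} (hxs : x ∈ s)
    (hxi : x ∈ U i) : s ⊆ U i := by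
  refine hs.subset_left_of_subset_union (hU i) (isOpen_iUnion fun j : {j // j ≠ i} => hU j)
    (Set.disjoint_iUnion_right.2 fun j => hdisj j.2.symm) (fun y hy => ?_) ⟨x, hxs, hxi⟩
  obtain ⟨j, hj⟩ := Set.mem_iUnion.1 (hcover hy)
  by_cases hji : j = i
  · exact Or.inl (hji ▸ hj)
  · exact Or.inr (Set.mem_iUnion.2 ⟨⟨j, hji⟩, hj⟩)

def pseudoBall (a : ℂ) (ε : ℝ) : Set ℂ := {w | ‖w‖ < 1 ∧ pseudoDist a w < ε}

lemma isOpen_pseudoBall {a : ℂ} (ha : ‖a‖ < 1) (ε : ℝ) : IsOpen (pseudoBall a ε) := by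
  have hcont : ContinuousOn (pseudoDist a) (Metric.ball 0 1) := by
    refine ContinuousOn.div (by fun_prop) (by fun_prop) fun w hw => (pseudoDenom_pos ha ?_).ne'
    exact (mem_ball_zero_iff.1 hw).le
  convert hcont.isOpen_inter_preimage Metric.isOpen_ball (isOpen_Iio (a := ε)) using 1
  ext w
  simp [pseudoBall]

lemma closure_pseudoBall_subset {a : ℂ} (ha : ‖a‖ < 1) {ε : ℝ} (hε : ε < 1) :
    closure (pseudoBall a ε) ⊆ Metric.ball 0 1 := by
  refine (closure_minimal (fun w hw => ?_) Metric.isClosed_closedBall).trans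
    (Metric.closedBall_subset_ball (ε₁ := 1 - (1 - ‖a‖) * (1 - ε) / 2) ?_)
  · exact mem_closedBall_zero_iff.2 (norm_le_of_pseudoDist_le ha hw.1 hε.le hw.2.le)
  · nlinarith

theorem weakPropertyHAt_of_forall_exists_pseudoDist_lt {ι : Type*} {B : ℂ → ℂ} {α : ι → ℂ}
    (hα : ∀ n, ‖α n‖ < 1) {η ε : ℝ} (hη : η ∈ Set.Ioo 0 1) (hε : ε ∈ Set.Ioo 0 (1 / 2))
    (hsep : Pairwise fun n m => 2 * ε ≤ pseudoDist (α n) (α m))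
    (hnear : ∀ z ∈ levelSet B η, ∃ n, pseudoDist (α n) z < ε) :
    WeakPropertyHAt B η := by
  have hdisj : Pairwise (Disjoint on fun n => pseudoBall (α n) ε) := by
    refine fun n m hnm => Set.disjoint_left.2 fun w hn hm => ?_
    have := pseudoDist_triangle (hα n) (hα m) hn.1 (z := w)
    rw [pseudoDist_comm w] at this
    linarith [hsep hnm, hn.2, hm.2]
  have hcomp : ∀ z ∈ levelSet B η, ∃ n,
      connectedComponentIn (levelSet B η) z ⊆ pseudoBall (α n) ε := by
    have hcover : levelSet B η ⊆ ⋃ n, pseudoBall (α n) ε := fun w hw => by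
      obtain ⟨n, hn⟩ := hnear w hw
      exact Set.mem_iUnion.2 ⟨n, hw.1, hn⟩
    intro z hz
    obtain ⟨n, hn⟩ := Set.mem_iUnion.1 (hcover hz)
    exact ⟨n, isPreconnected_connectedComponentIn.subset_of_mem_of_subset_iUnion
      (fun n => isOpen_pseudoBall (hα n) ε) hdisj
      ((connectedComponentIn_subset _ _).trans hcover) (mem_connectedComponentIn hz) hn⟩
  refine ⟨⟨hη, fun z hz => ?_⟩, ?_⟩
  · obtain ⟨n, hn⟩ := hcomp z hz
    exact (closure_mono hn).trans (closure_pseudoBall_subset (hα n) (by linarith [hε.2]))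
  · refine (Real.sSup_le (a := 2 * ε) ?_ (by linarith [hε.1])).trans_lt (by linarith [hε.2])
    rintro _ ⟨z₁, z₂, hz₁, hz₂, rfl⟩
    obtain ⟨n, hn⟩ := hcomp z₁ hz₁
    have h₁ := hn (mem_connectedComponentIn hz₁)
    have h₂ := hn hz₂
    have := pseudoDist_triangle h₁.1 h₂.1 (hα n)
    rw [pseudoDist_comm z₁ (α n)] at this
    linarith [h₁.2, h₂.2]

theorem stmt18_general (ι : Type)
    (B : ℂ → ℂ) (lam : ℂ) (α : ι → ℂ)
    (hlam : ‖lam‖ = 1)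
    (hα : ∀ n, ‖α n‖ < 1)
    (hform : ∀ z ∈ Metric.ball (0:ℂ) 1, B z = lam * ∏' n, blaschkeFactor (α n) z)
    (hsep : UniformlySeparated α) :
    ∃ η, WeakPropertyHAt B η := by
  obtain ⟨c, hc0, hc⟩ := hsep
  set δ := min c 1
  have hδ : 0 < δ := lt_min hc0 one_pos
  have hprod : ∀ n (F : Finset ι), n ∉ F → δ ≤ ∏ k ∈ F, pseudoDist (α k) (α n) :=
    fun n F hnF => (min_le_left c 1).trans (le_prod_pseudoDist_of_le_tprod hα (hc n) hnF)
  set A := 2 * Real.log δ⁻¹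
  have hA : 0 ≤ A := mul_nonneg zero_le_two
    (Real.log_nonneg ((one_le_inv₀ hδ).2 (min_le_right c 1)))
  set C := 3 * (196 * A + 2) * (41 * A + 1)
  have hε : 0 < δ / 3 := by positivity
  have hη : Real.exp (-(C / (δ / 3))) ∈ Set.Ioo 0 1 :=
    ⟨Real.exp_pos _, Real.exp_lt_one_iff.2 (neg_neg_of_pos (by positivity))⟩
  refine ⟨_, weakPropertyHAt_of_forall_exists_pseudoDist_lt hα hη
    ⟨hε, by linarith [min_le_right c 1]⟩ (fun n m hnm => ?_) (fun z hz => ?_)⟩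
  · have := hprod m {n} (Finset.notMem_singleton.2 hnm.symm)
    rw [Finset.prod_singleton] at this
    linarith
  · by_contra! hfar
    have hBz : ‖B z‖ = ‖∏' n, blaschkeFactor (α n) z‖ := by
      rw [hform z (mem_ball_zero_iff.2 hz.1), norm_mul, hlam, one_mul]
    have := le_norm_tprod_blaschkeFactor hα hz.1 hη.2.le <| exp_neg_div_le_prod_pseudoDist hα hz.1
      hε ((hasRowSumBound_of_le_prod hδ hprod).sum_one_sub_pseudoDist_sq_le hA hα hz.1) hfar
    exact hz.2.not_ge (hBz ▸ this)

/-- Every interpolating Blaschke product has weak Property 𝔥. -/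
theorem stmt18 (ι : Type) (hι : Countable ι)
    (B : ℂ → ℂ) (lam : ℂ) (α : ι → ℂ)
    (hlam : ‖lam‖ = 1)
    (hα : ∀ n, ‖α n‖ < 1)
    (hsum : Summable fun n => 1 - ‖α n‖)
    (hform : ∀ z ∈ Metric.ball (0:ℂ) 1, B z = lam * ∏' n, blaschkeFactor (α n) z)
    (hsep : UniformlySeparated α) :
    ∃ η, WeakPropertyHAt B η :=
  stmt18_general ι B lam α hlam hα hform hsep
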